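/- arXiv:2407.15365 — 6 statements merged into one kernel-verified Lean document; each statement's English description precedes it below -/
import Mathlib

section
/- Let an s-stage explicit Runge–Kutta method with coefficients (A, b, c), c_i = ∑_j a_{ij}, satisfy ∑_i b_i = 1, and suppose that for every dimension n, every constant skew-symmetric J ∈ ℝ^{n×n}, every smooth H : ℝⁿ → ℝ, and every initial value y₀, the one-step approximation satisfies H(y₁(h)) = H(y₀) + O(h³) as h → 0. Then ∑_i b_i c_i = 1/2; in particular, every consistent Runge–Kutta method of pseudo-energy-preserving order at least 2 has classical order at least 2. -/
/-! Test the method on the harmonic oscillator `ẏ = J y`, `H(y) = y ⬝ᵥ y / 2`. For a linear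
vector field the stages are `kᵢ = J y₀ + h cᵢ J² y₀ + O(h²)`, hence
`y₁ = y₀ + h J y₀ + h² (∑ bᵢcᵢ) J² y₀ + O(h³)`. Skew-symmetry of `J` kills the `O(h)` term of
`y₁ ⬝ᵥ y₁` and turns `y₀ ⬝ᵥ J² y₀` into `-(J y₀ ⬝ᵥ J y₀)`, so
`H(y₁) - H(y₀) = (1/2 - ∑ bᵢcᵢ) (J y₀ ⬝ᵥ J y₀) h² + O(h³)`. Choosing `J y₀ ≠ 0`, the
pseudo-energy-preserving condition forces `∑ bᵢcᵢ = 1/2`. -/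

open Filter Asymptotics Topology Matrix

/-- The gradient of `H : ℝⁿ → ℝ` in coordinates: `(∇H(y))_i = ∂H/∂y_i (y)`. -/
noncomputable def grad {n : ℕ} (H : (Fin n → ℝ) → ℝ) (y : Fin n → ℝ) : Fin n → ℝ :=
  fun i => fderiv ℝ H y (Pi.single i 1)

/-- The stages `k_i = f(y₀ + h ∑_{j<i} a_{ij} k_j)` of an explicit Runge--Kutta method. -/
noncomputable def rkStages {s n : ℕ} (A : Matrix (Fin s) (Fin s) ℝ)
    (f : (Fin n → ℝ) → (Fin n → ℝ)) (h : ℝ) (y₀ : Fin n → ℝ) :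
    Fin s → Fin n → ℝ
  | i => f (fun m => y₀ m + h * ∑ j : Fin s,
      if _ : (j : ℕ) < (i : ℕ) then A i j * rkStages A f h y₀ j m else 0)
  termination_by i => (i : ℕ)

/-- One step `y₁ = y₀ + h ∑_i b_i k_i` of an explicit Runge--Kutta method with
coefficients `(A, b)`, applied with step size `h` to `ẏ = f(y)` from `y₀`. -/
noncomputable def rkStep {s n : ℕ} (A : Matrix (Fin s) (Fin s) ℝ) (b : Fin s → ℝ)
    (f : (Fin n → ℝ) → (Fin n → ℝ)) (h : ℝ) (y₀ : Fin n → ℝ) : Fin n → ℝ :=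
  fun m => y₀ m + h * ∑ i, b i * rkStages A f h y₀ i m

namespace Asymptotics

theorem IsBigO.dotProduct {α ι 𝕜 : Type*} [Fintype ι] [NormedField 𝕜] {l : Filter α}
    {u v : α → ι → 𝕜} {f g : α → 𝕜} (hu : u =O[l] f) (hv : v =O[l] g) :
    (fun x => u x ⬝ᵥ v x) =O[l] fun x => f x * g x :=
  IsBigO.fun_sum fun m _ =>
    ((isBigO_of_le l fun x => norm_le_pi_norm (u x) m).trans hu).mul
      ((isBigO_of_le l fun x => norm_le_pi_norm (v x) m).trans hv)

end Asymptotics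

theorem eq_zero_of_const_mul_sq_isBigO_cube {𝕜 : Type*} [NontriviallyNormedField 𝕜] {c : 𝕜}
    (hc : (fun h : 𝕜 => c * h ^ 2) =O[𝓝 0] fun h => h ^ 3) : c = 0 := by
  by_contra hc0
  have hsq : (fun h : 𝕜 => h ^ 2) =O[𝓝 0] fun h => h ^ 3 :=
    (hc.const_mul_left c⁻¹).congr_left fun h => by field_simp
  have hne : ∃ᶠ h : 𝕜 in 𝓝 0, h ^ 2 ≠ 0 :=
    ((eventually_mem_nhdsWithin (s := {0}ᶜ)).frequently.filter_mono nhdsWithin_le_nhds).mono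
      fun h hh => pow_ne_zero 2 hh
  exact isLittleO_irrefl hne (hsq.trans_isLittleO (isLittleO_pow_pow (by norm_num)))

theorem dotProduct_self_sub_isBigO_cube {ι 𝕜 : Type*} [Fintype ι] [NontriviallyNormedField 𝕜]
    {y : 𝕜 → ι → 𝕜} {y₀ v w : ι → 𝕜}
    (hy : (fun h => y h - (y₀ + h • v + h ^ 2 • w)) =O[𝓝 0] fun h => h ^ 3) :
    (fun h => y h ⬝ᵥ y h - y₀ ⬝ᵥ y₀ - (2 * h * (y₀ ⬝ᵥ v) + h ^ 2 * (v ⬝ᵥ v + 2 * (y₀ ⬝ᵥ w))))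
      =O[𝓝 0] fun h => h ^ 3 := by
  set p : 𝕜 → ι → 𝕜 := fun h => y₀ + h • v + h ^ 2 • w
  change (fun h => y h - p h) =O[𝓝 0] _ at hy
  have hp : p =O[𝓝 0] fun _ => (1 : 𝕜) :=
    (Continuous.tendsto (by fun_prop) 0).isBigO_one 𝕜
  have hcube : (fun h : 𝕜 => h ^ 3) =O[𝓝 0] fun _ => (1 : 𝕜) :=
    (Continuous.tendsto (by fun_prop) 0).isBigO_one 𝕜
  have hrem : (fun h => (y h + p h) ⬝ᵥ (y h - p h)) =O[𝓝 0] fun h => h ^ 3 := by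
    have hsum : (fun h => y h + p h) =O[𝓝 0] fun _ => (1 : 𝕜) :=
      ((hy.trans hcube).add (hp.add hp)).congr_left fun h => by abel
    exact (hsum.dotProduct hy).congr_right fun h => one_mul _
  have hpoly : (fun h : 𝕜 => h ^ 3 * (2 * (v ⬝ᵥ w) + h * (w ⬝ᵥ w))) =O[𝓝 0] fun h => h ^ 3 := by
    simpa using (isBigO_refl (fun h : 𝕜 => h ^ 3) _).mul
      ((Continuous.tendsto (by fun_prop) 0).isBigO_one 𝕜)
  refine (hrem.add hpoly).congr_left fun h => ?_
  have hdiff : (y h + p h) ⬝ᵥ (y h - p h) = y h ⬝ᵥ y h - p h ⬝ᵥ p h := by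
    rw [add_dotProduct, dotProduct_sub, dotProduct_sub, dotProduct_comm (p h) (y h)]
    ring
  have hsq : p h ⬝ᵥ p h = y₀ ⬝ᵥ y₀ + 2 * h * (y₀ ⬝ᵥ v) + h ^ 2 * (v ⬝ᵥ v + 2 * (y₀ ⬝ᵥ w))
      + h ^ 3 * (2 * (v ⬝ᵥ w) + h * (w ⬝ᵥ w)) := by
    simp only [p, add_dotProduct, dotProduct_add, smul_dotProduct, dotProduct_smul, smul_eq_mul,
      dotProduct_comm v y₀, dotProduct_comm w y₀, dotProduct_comm w v]
    ring
  rw [hdiff, hsq]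
  ring

theorem hasFDerivAt_dotProduct_self {ι : Type*} [Fintype ι] (y : ι → ℝ) :
    HasFDerivAt (fun x : ι → ℝ => x ⬝ᵥ x)
      (∑ m, (y m • ContinuousLinearMap.proj m + y m • ContinuousLinearMap.proj m :
        (ι → ℝ) →L[ℝ] ℝ)) y :=
  HasFDerivAt.fun_sum fun m _ => (hasFDerivAt_apply m y).mul (hasFDerivAt_apply m y)

theorem grad_half_dotProduct_self {n : ℕ} (y : Fin n → ℝ) :
    grad (fun x : Fin n → ℝ => x ⬝ᵥ x / 2) y = y := by
  ext i
  have hH := (hasFDerivAt_dotProduct_self y).mul_const (2⁻¹ : ℝ)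
  simp only [← div_eq_mul_inv] at hH
  rw [grad, hH.fderiv]
  simp [Pi.single_apply, Finset.sum_add_distrib, ← two_mul]

theorem contDiff_half_dotProduct_self {ι : Type*} [Fintype ι] :
    ContDiff ℝ (⊤ : ℕ∞) (fun x : ι → ℝ => x ⬝ᵥ x / 2) := by
  unfold dotProduct; fun_prop

theorem dotProduct_mulVec_of_transpose_eq_neg {n : Type*} [Fintype n] {R : Type*} [CommRing R]
    {J : Matrix n n R} (hJ : Jᵀ = -J) (x y : n → R) : x ⬝ᵥ J *ᵥ y = -(J *ᵥ x ⬝ᵥ y) := by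
  rw [dotProduct_mulVec, ← mulVec_transpose, hJ, neg_mulVec, neg_dotProduct]

theorem dotProduct_mulVec_self_of_transpose_eq_neg {n R : Type*} [Fintype n] [CommRing R]
    [NoZeroDivisors R] [CharZero R] {J : Matrix n n R} (hJ : Jᵀ = -J) (x : n → R) :
    x ⬝ᵥ J *ᵥ x = 0 := by
  have h := dotProduct_mulVec_of_transpose_eq_neg hJ x x
  rwa [dotProduct_comm (J *ᵥ x), self_eq_neg] at h

section ExplicitRungeKutta

variable {s n : ℕ} {A : Matrix (Fin s) (Fin s) ℝ}

theorem rkStages_eq_of_strictLowerTriangular (hA : ∀ i j : Fin s, (i : ℕ) ≤ (j : ℕ) → A i j = 0)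
    (f : (Fin n → ℝ) → (Fin n → ℝ)) (h : ℝ) (y₀ : Fin n → ℝ) (i : Fin s) :
    rkStages A f h y₀ i = f (y₀ + h • ∑ j, A i j • rkStages A f h y₀ j) := by
  rw [rkStages]
  congr 1
  ext m
  simp only [Pi.add_apply, Pi.smul_apply, Finset.sum_apply, smul_eq_mul]
  congr 2
  refine Finset.sum_congr rfl fun j _ => ?_
  split_ifs with hji
  · rfl
  · rw [hA i j (not_lt.mp hji), zero_mul]

theorem rkStep_eq_add_smul_sum (b : Fin s → ℝ) (f : (Fin n → ℝ) → (Fin n → ℝ)) (h : ℝ)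
    (y₀ : Fin n → ℝ) :
    rkStep A b f h y₀ = y₀ + h • ∑ i, b i • rkStages A f h y₀ i := by
  ext m
  simp [rkStep]

theorem rkStages_linear_isBigO (hA : ∀ i j : Fin s, (i : ℕ) ≤ (j : ℕ) → A i j = 0)
    (L : (Fin n → ℝ) →L[ℝ] (Fin n → ℝ)) (y₀ : Fin n → ℝ) (i : Fin s) :
    (fun h => rkStages A L h y₀ i - (L y₀ + (h * ∑ j, A i j) • L (L y₀)))
      =O[𝓝 0] fun h => h ^ 2 := by
  induction i using Fin.strong_induction_on with
  | h i ih =>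
  -- `kᵢ - (L y₀ + h cᵢ L² y₀) = h • L (∑ⱼ aᵢⱼ • (kⱼ - L y₀))`, and `kⱼ - L y₀ = O(h)` for `j < i`.
  have hfirst : ∀ j, (fun h => A i j • (rkStages A L h y₀ j - L y₀)) =O[𝓝 0] fun h => h := by
    intro j
    rcases lt_or_ge j i with hji | hij
    · have hdrift : (fun h : ℝ => (h * ∑ k, A j k) • L (L y₀)) =O[𝓝 0] fun h => h :=
        isBigO_of_le' (c := ‖(∑ k, A j k) • L (L y₀)‖) (𝓝 0) fun h => by
          rw [mul_smul, norm_smul, mul_comm]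
      have hj := ((ih j hji).trans (isLittleO_pow_id (by norm_num)).isBigO).add hdrift
      exact (hj.const_smul_left (A i j)).congr_left fun h => by
        simp only [Pi.smul_apply, sub_add_eq_sub_sub, sub_add_cancel]
    · simp only [hA i j hij, zero_smul]
      exact isBigO_zero _ _
  have hsum : (fun h => L (∑ j, A i j • (rkStages A L h y₀ j - L y₀))) =O[𝓝 0] fun h => h :=
    (L.isBigO_comp _ _).trans (IsBigO.fun_sum fun j _ => hfirst j)
  refine ((isBigO_refl (fun h : ℝ => h) (𝓝 0)).smul hsum).congr (fun h => ?_) fun h => by ring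
  rw [rkStages_eq_of_strictLowerTriangular hA]
  simp only [map_add, map_smul, map_sum, map_sub, Finset.sum_sub_distrib, smul_sub,
    ← Finset.sum_smul, smul_smul]
  abel

theorem rkStep_linear_isBigO (hA : ∀ i j : Fin s, (i : ℕ) ≤ (j : ℕ) → A i j = 0)
    (b : Fin s → ℝ) (L : (Fin n → ℝ) →L[ℝ] (Fin n → ℝ)) (y₀ : Fin n → ℝ) :
    (fun h => rkStep A b L h y₀ - (y₀ + h • (∑ i, b i) • L y₀
      + h ^ 2 • (∑ i, b i * ∑ j, A i j) • L (L y₀))) =O[𝓝 0] fun h => h ^ 3 := by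
  have hsum := IsBigO.fun_sum fun i (_ : i ∈ Finset.univ) =>
    (rkStages_linear_isBigO hA L y₀ i).const_smul_left (b i)
  refine ((isBigO_refl (fun h : ℝ => h) (𝓝 0)).smul hsum).congr (fun h => ?_) fun h => by ring
  have hcoeff : ∑ i, b i * (h * ∑ j, A i j) = h * ∑ i, b i * ∑ j, A i j := by
    rw [Finset.mul_sum]
    exact Finset.sum_congr rfl fun i _ => by ring
  simp only [rkStep_eq_add_smul_sum, Pi.smul_apply, smul_sub, smul_add, Finset.sum_sub_distrib,
    Finset.sum_add_distrib, ← Finset.sum_smul, smul_smul, hcoeff]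
  module

theorem rkStep_skew_energy_isBigO (hA : ∀ i j : Fin s, (i : ℕ) ≤ (j : ℕ) → A i j = 0)
    {b : Fin s → ℝ} (hb : ∑ i, b i = 1) {J : Matrix (Fin n) (Fin n) ℝ} (hJ : Jᵀ = -J)
    (y₀ : Fin n → ℝ) :
    (fun h => rkStep A b (J *ᵥ ·) h y₀ ⬝ᵥ rkStep A b (J *ᵥ ·) h y₀ - y₀ ⬝ᵥ y₀
      - (1 - 2 * ∑ i, b i * ∑ j, A i j) * (J *ᵥ y₀ ⬝ᵥ J *ᵥ y₀) * h ^ 2)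
      =O[𝓝 0] fun h => h ^ 3 := by
  let L := LinearMap.toContinuousLinearMap (Matrix.toLin' J)
  have hL : ⇑L = (J *ᵥ ·) := by ext; simp [L]
  have hexp := dotProduct_self_sub_isBigO_cube (rkStep_linear_isBigO hA b L y₀)
  simp only [hL] at hexp
  refine hexp.congr_left fun h => ?_
  simp only [hb, one_smul, dotProduct_smul, smul_eq_mul,
    dotProduct_mulVec_self_of_transpose_eq_neg hJ, dotProduct_mulVec_of_transpose_eq_neg hJ y₀]
  ring

end ExplicitRungeKutta

/-- A consistent explicit Runge--Kutta method of pseudo-energy-preserving order at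
least 2 (energy error `O(h³)` for every Hamiltonian system) satisfies `∑ bᵢcᵢ = 1/2`,
i.e. it has classical order at least 2. -/
theorem pep_order_two_implies_classical_order_two {s : ℕ}
    (A : Matrix (Fin s) (Fin s) ℝ) (b : Fin s → ℝ)
    (hA : ∀ i j : Fin s, (i : ℕ) ≤ (j : ℕ) → A i j = 0)
    (hb : ∑ i, b i = 1)
    (hPEP : ∀ (n : ℕ) (J : Matrix (Fin n) (Fin n) ℝ), Jᵀ = -J →
      ∀ (H : (Fin n → ℝ) → ℝ), ContDiff ℝ (⊤ : ℕ∞) H →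
        ∀ y₀ : Fin n → ℝ,
          (fun h => H (rkStep A b (fun y => J.mulVec (grad H y)) h y₀) - H y₀)
            =O[𝓝 (0 : ℝ)] (fun h => h ^ 3)) :
    ∑ i, b i * (∑ j, A i j) = 1 / 2 := by
  let J : Matrix (Fin 2) (Fin 2) ℝ := !![0, 1; -1, 0]
  have hJ : Jᵀ = -J := by
    ext i j
    fin_cases i <;> fin_cases j <;> simp [J]
  let y₀ : Fin 2 → ℝ := ![1, 0]
  have hJy₀ : J *ᵥ y₀ ⬝ᵥ J *ᵥ y₀ = 1 := by simp [J, y₀]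
  have hPEP₀ := hPEP 2 J hJ _ contDiff_half_dotProduct_self y₀
  simp only [grad_half_dotProduct_self] at hPEP₀
  have hquad := (hPEP₀.const_mul_left 2).sub (rkStep_skew_energy_isBigO hA hb hJ y₀)
  have hβ := eq_zero_of_const_mul_sq_isBigO_cube (c := 1 - 2 * ∑ i, b i * ∑ j, A i j)
    (hquad.congr_left fun h => by rw [hJy₀]; ring)
  linarith
end

section
/- Let an s-stage explicit Runge–Kutta method with coefficients (A, b, c), c_i = ∑_j a_{ij}, satisfy the second-order conditions ∑_i b_i = 1 and ∑_i b_i c_i = 1/2 together with the condition ∑_i b_i c_i² = 1/3. Then for every Hamiltonian system ẏ = J∇H(y) with J constant skew-symmetric and H smooth, and every initial value y₀, the one-step approximation satisfies H(y₁(h)) = H(y₀) + O(h⁴) as h → 0; i.e., the method has pseudo-energy-preserving order at least 3. -/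
open Filter Asymptotics Topology Matrix

open scoped ContDiff Nat

/-!
Write `f = J∇H` and `y₁(h) = y₀ + h ∑ bᵢ kᵢ(h)`. Differentiating the stage equations at `h = 0`
gives `y₁' = (∑ bᵢ) f`, `y₁'' = 2 (∑ bᵢcᵢ) f'f` and
`y₁''' = 3 (∑ bᵢcᵢ²) f''(f,f) + 6 (∑ bᵢaᵢⱼcⱼ) f'f'f`, so under the order conditions these agree
with the derivatives of the exact flow except for the coefficient of `f'f'f`. That coefficient is
invisible to the energy: `∇H·f'f'f = -(∇²H f)·J(∇²H f) = 0` by skew-symmetry of `J`. Hence the first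
three derivatives of `h ↦ H(y₁(h))` vanish at `0`, as they do along the exact flow, and Taylor's
theorem gives `H(y₁(h)) - H(y₀) = O(h⁴)`.
-/

theorem sub_isBigO_pow_of_iteratedDeriv_eq_zero {E : Type*} [NormedAddCommGroup E]
    [NormedSpace ℝ E] {g : ℝ → E} {x₀ : ℝ} {n : ℕ} (hg : ContDiff ℝ n g)
    (hder : ∀ k, 0 < k → k < n → iteratedDeriv k g x₀ = 0) :
    (fun x => g x - g x₀) =O[𝓝 x₀] fun x => (x - x₀) ^ n := by
  have hrem := (taylor_isLittleO_univ (x₀ := x₀) hg).isBigO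
  cases n with
  | zero => simpa using hrem
  | succ m =>
    set v := ((m + 1)! : ℝ)⁻¹ • iteratedDeriv (m + 1) g x₀
    have htaylor : ∀ x,
        taylorWithinEval g (m + 1) Set.univ x₀ x = g x₀ + (x - x₀) ^ (m + 1) • v := by
      intro x
      rw [taylor_within_apply, Finset.sum_range_succ, Finset.sum_eq_single 0]
      · simp [v, smul_smul, mul_comm]
      · intro k hk hk0
        rw [iteratedDerivWithin_univ, hder k (Nat.pos_of_ne_zero hk0)
          (by simpa using Finset.mem_range.1 hk), smul_zero]
      · simp
    have hpoly : (fun x => (x - x₀) ^ (m + 1) • v) =O[𝓝 x₀] fun x => (x - x₀) ^ (m + 1) :=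
      IsBigO.of_bound ‖v‖ (Eventually.of_forall fun x => by rw [norm_smul, mul_comm])
    refine (hrem.add hpoly).congr_left fun x => ?_
    rw [htaylor]
    abel

theorem iteratedDeriv_succ_id_smul_zero {𝕜 F : Type*} [NontriviallyNormedField 𝕜]
    [NormedAddCommGroup F] [NormedSpace 𝕜 F] {κ : 𝕜 → F} {k : ℕ}
    (hκ : ContDiffAt 𝕜 (k + 1) κ 0) :
    iteratedDeriv (k + 1) (fun t => t • κ t) 0 = ((k : 𝕜) + 1) • iteratedDeriv k κ 0 := by
  have hleib := iteratedDerivWithin_smul (Set.mem_univ (0 : 𝕜)) uniqueDiffOn_univ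
    (f := fun t : 𝕜 => t) (contDiff_id.contDiffAt.contDiffWithinAt) hκ.contDiffWithinAt
  simp only [iteratedDerivWithin_univ] at hleib
  rw [show (fun t => t • κ t) = (fun t : 𝕜 => t) • κ from rfl, hleib,
    Finset.sum_eq_single 1]
  · simp [iteratedDeriv_fun_id_zero, ← Nat.cast_smul_eq_nsmul 𝕜]
  · intro i _ hi
    simp [iteratedDeriv_fun_id_zero, hi]
  · simp

section ChainRule

variable {𝕜 E F : Type*} [NontriviallyNormedField 𝕜] [NormedAddCommGroup E] [NormedSpace 𝕜 E]
  [NormedAddCommGroup F] [NormedSpace 𝕜 F] {γ : 𝕜 → E}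

theorem ContDiff.fderiv_infty {g : E → F} (hg : ContDiff 𝕜 ∞ g) : ContDiff 𝕜 ∞ (fderiv 𝕜 g) :=
  hg.fderiv_right le_rfl

theorem ContDiff.deriv_infty {γ : 𝕜 → E} (hγ : ContDiff 𝕜 ∞ γ) : ContDiff 𝕜 ∞ (deriv γ) :=
  (contDiff_infty_iff_deriv.1 hγ).2

theorem hasDerivAt_comp_clm_apply {V W : Type*} [NormedAddCommGroup V] [NormedSpace 𝕜 V]
    [NormedAddCommGroup W] [NormedSpace 𝕜 W] {G : E → V →L[𝕜] W} {v : 𝕜 → V}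
    (hG : ContDiff 𝕜 ∞ G) (hγ : ContDiff 𝕜 ∞ γ) (hv : ContDiff 𝕜 ∞ v) (t : 𝕜) :
    HasDerivAt (fun t => G (γ t) (v t))
      (fderiv 𝕜 G (γ t) (deriv γ t) (v t) + G (γ t) (deriv v t)) t :=
  ((hG.differentiable (by simp) _).hasFDerivAt.comp_hasDerivAt t
    (hγ.differentiable (by simp) t).hasDerivAt).clm_apply (hv.differentiable (by simp) t).hasDerivAt

variable {g : E → F} (hg : ContDiff 𝕜 ∞ g) (hγ : ContDiff 𝕜 ∞ γ)
include hg hγ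

theorem deriv_comp_eq : deriv (g ∘ γ) = fun t => fderiv 𝕜 g (γ t) (deriv γ t) :=
  funext fun t =>
    fderiv_comp_deriv t (hg.differentiable (by simp) _) (hγ.differentiable (by simp) t)

theorem iteratedDeriv_two_comp (t : 𝕜) :
    iteratedDeriv 2 (g ∘ γ) t =
      fderiv 𝕜 (fderiv 𝕜 g) (γ t) (deriv γ t) (deriv γ t) +
        fderiv 𝕜 g (γ t) (iteratedDeriv 2 γ t) := by
  simp only [iteratedDeriv_succ, iteratedDeriv_zero, deriv_comp_eq hg hγ]
  exact (hasDerivAt_comp_clm_apply hg.fderiv_infty hγ hγ.deriv_infty t).deriv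

theorem iteratedDeriv_three_comp (t : 𝕜) :
    iteratedDeriv 3 (g ∘ γ) t =
      fderiv 𝕜 (fderiv 𝕜 (fderiv 𝕜 g)) (γ t) (deriv γ t) (deriv γ t) (deriv γ t) +
        fderiv 𝕜 (fderiv 𝕜 g) (γ t) (iteratedDeriv 2 γ t) (deriv γ t) +
        2 • fderiv 𝕜 (fderiv 𝕜 g) (γ t) (deriv γ t) (iteratedDeriv 2 γ t) +
        fderiv 𝕜 g (γ t) (iteratedDeriv 3 γ t) := by
  have hg' := hg.fderiv_infty
  have hγ' := hγ.deriv_infty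
  have hsecond : deriv (deriv (g ∘ γ)) = fun t =>
      fderiv 𝕜 (fderiv 𝕜 g) (γ t) (deriv γ t) (deriv γ t) +
        fderiv 𝕜 g (γ t) (deriv (deriv γ) t) := by
    ext t
    simpa [iteratedDeriv_succ] using iteratedDeriv_two_comp hg hγ t
  have hfirst := (hasDerivAt_comp_clm_apply hg'.fderiv_infty hγ hγ' t).clm_apply
    (hγ'.differentiable (by simp) t).hasDerivAt
  have hlast := hasDerivAt_comp_clm_apply hg' hγ hγ'.deriv_infty t
  simp only [iteratedDeriv_succ, iteratedDeriv_zero, hsecond]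
  rw [(hfirst.fun_add hlast).deriv, _root_.add_apply]
  abel

end ChainRule

section Hamiltonian

variable {E : Type*} [NormedAddCommGroup E] [NormedSpace ℝ E] (T : StrongDual ℝ E →L[ℝ] E)

noncomputable def hamiltonianField (H : E → ℝ) (y : E) : E := T (fderiv ℝ H y)

-- `T` plays the role of `J`, acting on covectors; `hT` is the skew-symmetry `Jᵀ = -J`.
variable {T} (hT : ∀ L L' : StrongDual ℝ E, L (T L') = -L' (T L))

include hT in
theorem apply_skew_self (L : StrongDual ℝ E) : L (T L) = 0 := by
  linarith [hT L L]

variable {H : E → ℝ} (hH : ContDiff ℝ ∞ H)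
include hH

theorem contDiff_hamiltonianField : ContDiff ℝ ∞ (hamiltonianField T H) :=
  T.contDiff.comp hH.fderiv_infty

theorem fderiv_hamiltonianField :
    fderiv ℝ (hamiltonianField T H) = fun y => T.comp (fderiv ℝ (fderiv ℝ H) y) :=
  funext fun y => (T.hasFDerivAt.comp y
    (hH.fderiv_infty.differentiable (by simp) y).hasFDerivAt).fderiv

theorem fderiv_fderiv_hamiltonianField (y u v : E) :
    fderiv ℝ (fderiv ℝ (hamiltonianField T H)) y u v =
      T (fderiv ℝ (fderiv ℝ (fderiv ℝ H)) y u v) := by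
  have hcomp := (ContinuousLinearMap.compL ℝ E (StrongDual ℝ E) E T).hasFDerivAt.comp y
    (hH.fderiv_infty.fderiv_infty.differentiable (by simp) y).hasFDerivAt
  rw [fderiv_hamiltonianField hH]
  exact congrArg (fun L => L u v) hcomp.fderiv

include hT

/-- With `α = 1` the hypotheses are the Taylor coefficients at `0` of the exact flow of
`ẏ = hamiltonianField T H y` through `y₀`. -/
theorem iteratedDeriv_hamiltonian_comp_eq_zero {γ : ℝ → E} (hγ : ContDiff ℝ ∞ γ) {y₀ : E}
    (α : ℝ) (h₀ : γ 0 = y₀) (h₁ : deriv γ 0 = hamiltonianField T H y₀)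
    (h₂ : iteratedDeriv 2 γ 0 = fderiv ℝ (hamiltonianField T H) y₀ (hamiltonianField T H y₀))
    (h₃ : iteratedDeriv 3 γ 0 =
      fderiv ℝ (fderiv ℝ (hamiltonianField T H)) y₀ (hamiltonianField T H y₀)
          (hamiltonianField T H y₀) +
        α • fderiv ℝ (hamiltonianField T H) y₀
          (fderiv ℝ (hamiltonianField T H) y₀ (hamiltonianField T H y₀)))
    (k : ℕ) (hk₀ : 0 < k) (hk₄ : k < 4) : iteratedDeriv k (H ∘ γ) 0 = 0 := by
  subst h₀
  have hsymm : IsSymmSndFDerivAt ℝ H (γ 0) :=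
    hH.contDiffAt.isSymmSndFDerivAt (by simp; decide)
  rw [fderiv_fderiv_hamiltonianField hH] at h₃
  simp only [fderiv_hamiltonianField hH, ContinuousLinearMap.comp_apply, hamiltonianField]
    at h₁ h₂ h₃
  set X := T (fderiv ℝ H (γ 0))
  set F₁ := T (fderiv ℝ (fderiv ℝ H) (γ 0) X)
  have hF₁ : fderiv ℝ (fderiv ℝ H) (γ 0) X F₁ = 0 := apply_skew_self hT _
  interval_cases k
  · simp only [iteratedDeriv_one, deriv_comp_eq hH hγ, h₁]
    exact apply_skew_self hT _
  · rw [iteratedDeriv_two_comp hH hγ, h₁, h₂, hT (fderiv ℝ H (γ 0)), add_neg_cancel]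
  · have hR : fderiv ℝ H (γ 0) (T (fderiv ℝ (fderiv ℝ H) (γ 0) F₁)) = 0 := by
      rw [hT, hsymm, hF₁, neg_zero]
    rw [iteratedDeriv_three_comp hH hγ, h₁, h₂, h₃, map_add, map_smul, hR, hT (fderiv ℝ H (γ 0)),
      hsymm F₁, hF₁]
    simp only [smul_zero, add_zero]
    exact add_neg_cancel _

end Hamiltonian

theorem StrongDual.apply_eq_dotProduct {n : ℕ} (L : StrongDual ℝ (Fin n → ℝ)) (w : Fin n → ℝ) :
    L w = (fun i => L (Pi.single i 1)) ⬝ᵥ w := by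
  have hsingle : ∀ i, Pi.single i (w i) = w i • (Pi.single i 1 : Fin n → ℝ) := fun i => by
    rw [← Pi.single_smul', smul_eq_mul, mul_one]
  conv_lhs => rw [← Finset.univ_sum_single w]
  simp only [map_sum, hsingle, map_smul, smul_eq_mul, dotProduct, mul_comm]

namespace Matrix

variable {n : ℕ}

noncomputable def mulVecDual (J : Matrix (Fin n) (Fin n) ℝ) :
    StrongDual ℝ (Fin n → ℝ) →L[ℝ] (Fin n → ℝ) :=
  (toLin' J).toContinuousLinearMap ∘L
    ContinuousLinearMap.pi fun i => ContinuousLinearMap.apply ℝ ℝ (Pi.single i 1)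

theorem mulVecDual_apply (J : Matrix (Fin n) (Fin n) ℝ) (L : StrongDual ℝ (Fin n → ℝ)) :
    J.mulVecDual L = J *ᵥ fun i => L (Pi.single i 1) := rfl

theorem hamiltonianField_mulVecDual (J : Matrix (Fin n) (Fin n) ℝ) (H : (Fin n → ℝ) → ℝ) :
    hamiltonianField J.mulVecDual H = fun y => J *ᵥ grad H y := rfl

theorem mulVecDual_skew {J : Matrix (Fin n) (Fin n) ℝ} (hJ : Jᵀ = -J)
    (L L' : StrongDual ℝ (Fin n → ℝ)) : L (J.mulVecDual L') = -L' (J.mulVecDual L) := by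
  rw [L.apply_eq_dotProduct, L'.apply_eq_dotProduct, mulVecDual_apply, mulVecDual_apply,
    dotProduct_mulVec, ← mulVec_transpose, hJ, neg_mulVec, neg_dotProduct, dotProduct_comm]

end Matrix

section RungeKutta

variable {s n : ℕ} (A : Matrix (Fin s) (Fin s) ℝ) (f : (Fin n → ℝ) → (Fin n → ℝ))
  (y₀ : Fin n → ℝ)

/-- With `w = b` this is the step `h ↦ y₁(h)`, with `w = A i` the argument of the `i`-th stage. -/
noncomputable def rkCurve (w : Fin s → ℝ) (h : ℝ) : Fin n → ℝ :=
  y₀ + h • ∑ j, w j • rkStages A f h y₀ j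

theorem rkStep_eq_rkCurve (b : Fin s → ℝ) (h : ℝ) : rkStep A b f h y₀ = rkCurve A f y₀ b h := by
  ext m
  simp [rkStep, rkCurve, Finset.sum_apply]

@[simp]
theorem rkCurve_zero (w : Fin s → ℝ) : rkCurve A f y₀ w 0 = y₀ := by
  simp [rkCurve]

variable {A} (hA : ∀ i j : Fin s, (i : ℕ) ≤ (j : ℕ) → A i j = 0)
include hA

theorem rkStages_eq_apply_rkCurve (h : ℝ) (i : Fin s) :
    rkStages A f h y₀ i = f (rkCurve A f y₀ (A i) h) := by
  rw [rkStages]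
  congr 1
  ext m
  simp only [rkCurve, Pi.add_apply, Pi.smul_apply, Finset.sum_apply, smul_eq_mul]
  congr 2
  refine Finset.sum_congr rfl fun j _ => ?_
  split_ifs with hj
  · rfl
  · rw [hA i j (by omega), zero_mul]

theorem rkStages_eq_comp_rkCurve (i : Fin s) :
    (fun h => rkStages A f h y₀ i) = f ∘ rkCurve A f y₀ (A i) :=
  funext fun h => rkStages_eq_apply_rkCurve f y₀ hA h i

theorem rkStages_zero (i : Fin s) : rkStages A f 0 y₀ i = f y₀ := by
  rw [rkStages_eq_apply_rkCurve f y₀ hA, rkCurve_zero]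

variable {f} (hf : ContDiff ℝ ∞ f)
include hf

theorem contDiff_rkStages (i : Fin s) : ContDiff ℝ ∞ (fun h => rkStages A f h y₀ i) := by
  induction i using WellFoundedLT.induction with
  | _ i ih =>
    rw [rkStages_eq_comp_rkCurve f y₀ hA]
    refine hf.comp (contDiff_const.add (contDiff_id.smul (ContDiff.sum fun j _ => ?_)))
    by_cases hj : j < i
    · exact (ih j hj).const_smul _
    · simp only [hA i j (not_lt.1 hj), zero_smul]
      exact contDiff_const

theorem contDiff_rkCurve (w : Fin s → ℝ) : ContDiff ℝ ∞ (rkCurve A f y₀ w) :=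
  contDiff_const.add (contDiff_id.smul (ContDiff.sum fun j _ =>
    (contDiff_rkStages y₀ hA hf j).const_smul _))

theorem iteratedDeriv_succ_rkCurve_zero (w : Fin s → ℝ) (k : ℕ) :
    iteratedDeriv (k + 1) (rkCurve A f y₀ w) 0 =
      ((k : ℝ) + 1) • ∑ j, w j • iteratedDeriv k (fun h => rkStages A f h y₀ j) 0 := by
  have hstage : ∀ j, ContDiffAt ℝ k (fun h => rkStages A f h y₀ j) 0 := fun j =>
    (contDiff_rkStages y₀ hA hf j).contDiffAt.of_le (mod_cast le_top)
  have hsum : ContDiffAt ℝ (k + 1) (fun h => ∑ j, w j • rkStages A f h y₀ j) 0 :=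
    (ContDiff.sum fun j _ => (contDiff_rkStages y₀ hA hf j).const_smul (w j)).contDiffAt.of_le
      (mod_cast le_top)
  change iteratedDeriv (k + 1) (fun h => y₀ + h • ∑ j, w j • rkStages A f h y₀ j) 0 = _
  rw [iteratedDeriv_const_add k.succ_pos, iteratedDeriv_succ_id_smul_zero hsum,
    iteratedDeriv_fun_sum fun j _ => (hstage j).const_smul (w j)]
  congr 1
  exact Finset.sum_congr rfl fun j _ => iteratedDeriv_const_smul (hstage j) (w j)

theorem deriv_rkCurve_zero (w : Fin s → ℝ) :
    deriv (rkCurve A f y₀ w) 0 = (∑ j, w j) • f y₀ := by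
  rw [← iteratedDeriv_one, iteratedDeriv_succ_rkCurve_zero y₀ hA hf]
  simp [rkStages_zero f y₀ hA, Finset.sum_smul]

variable {c : Fin s → ℝ} (hc : ∀ i, c i = ∑ j, A i j)
include hc

theorem deriv_rkStages_zero (i : Fin s) :
    deriv (fun h => rkStages A f h y₀ i) 0 = c i • fderiv ℝ f y₀ (f y₀) := by
  simp only [rkStages_eq_comp_rkCurve f y₀ hA, deriv_comp_eq hf (contDiff_rkCurve y₀ hA hf _),
    rkCurve_zero, deriv_rkCurve_zero y₀ hA hf, ← hc, map_smul]

theorem iteratedDeriv_two_rkCurve_zero (w : Fin s → ℝ) :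
    iteratedDeriv 2 (rkCurve A f y₀ w) 0 = (2 * ∑ j, w j * c j) • fderiv ℝ f y₀ (f y₀) := by
  rw [iteratedDeriv_succ_rkCurve_zero y₀ hA hf]
  simp [deriv_rkStages_zero y₀ hA hf hc, smul_smul, ← Finset.sum_smul,
    one_add_one_eq_two]

theorem iteratedDeriv_two_rkStages_zero (i : Fin s) :
    iteratedDeriv 2 (fun h => rkStages A f h y₀ i) 0 =
      c i ^ 2 • fderiv ℝ (fderiv ℝ f) y₀ (f y₀) (f y₀) +
        (2 * ∑ j, A i j * c j) • fderiv ℝ f y₀ (fderiv ℝ f y₀ (f y₀)) := by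
  rw [rkStages_eq_comp_rkCurve f y₀ hA, iteratedDeriv_two_comp hf (contDiff_rkCurve y₀ hA hf _),
    rkCurve_zero, deriv_rkCurve_zero y₀ hA hf, ← hc, iteratedDeriv_two_rkCurve_zero y₀ hA hf hc]
  simp [smul_smul, pow_two]

theorem iteratedDeriv_three_rkCurve_zero (w : Fin s → ℝ) :
    iteratedDeriv 3 (rkCurve A f y₀ w) 0 =
      (3 * ∑ j, w j * c j ^ 2) • fderiv ℝ (fderiv ℝ f) y₀ (f y₀) (f y₀) +
        (6 * ∑ j, w j * ∑ l, A j l * c l) • fderiv ℝ f y₀ (fderiv ℝ f y₀ (f y₀)) := by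
  rw [iteratedDeriv_succ_rkCurve_zero y₀ hA hf]
  simp only [iteratedDeriv_two_rkStages_zero y₀ hA hf hc, smul_add, smul_smul,
    Finset.sum_add_distrib, ← Finset.sum_smul, Finset.mul_sum]
  congr 2
  · exact Finset.sum_congr rfl fun j _ => by push_cast; ring
  · exact Finset.sum_congr rfl fun j _ => Finset.sum_congr rfl fun l _ => by push_cast; ring

end RungeKutta

/-- An explicit Runge--Kutta method satisfying the second-order conditions together
with `∑ bᵢcᵢ² = 1/3` has pseudo-energy-preserving order at least 3: the energy error
after one step is `O(h⁴)` for every Hamiltonian system. -/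
theorem pep_order_three_sufficient {s : ℕ}
    (A : Matrix (Fin s) (Fin s) ℝ) (b : Fin s → ℝ) (c : Fin s → ℝ)
    (hA : ∀ i j : Fin s, (i : ℕ) ≤ (j : ℕ) → A i j = 0)
    (hc : ∀ i, c i = ∑ j, A i j)
    (hb : ∑ i, b i = 1)
    (hbc : ∑ i, b i * c i = 1 / 2)
    (hbc2 : ∑ i, b i * c i ^ 2 = 1 / 3) :
    ∀ (n : ℕ) (J : Matrix (Fin n) (Fin n) ℝ), Jᵀ = -J →
      ∀ (H : (Fin n → ℝ) → ℝ), ContDiff ℝ (⊤ : ℕ∞) H →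
        ∀ y₀ : Fin n → ℝ,
          (fun h => H (rkStep A b (fun y => J.mulVec (grad H y)) h y₀) - H y₀)
            =O[𝓝 (0 : ℝ)] (fun h => h ^ 4) := by
  intro n J hJ H hH y₀
  rw [← J.hamiltonianField_mulVecDual H]
  set f := hamiltonianField J.mulVecDual H
  have hf : ContDiff ℝ ∞ f := contDiff_hamiltonianField hH
  have hγ := contDiff_rkCurve y₀ hA hf b
  have h₁ : deriv (rkCurve A f y₀ b) 0 = f y₀ := by
    rw [deriv_rkCurve_zero y₀ hA hf, hb, one_smul]
  have h₂ : iteratedDeriv 2 (rkCurve A f y₀ b) 0 = fderiv ℝ f y₀ (f y₀) := by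
    rw [iteratedDeriv_two_rkCurve_zero y₀ hA hf hc, hbc]
    norm_num
  have h₃ : iteratedDeriv 3 (rkCurve A f y₀ b) 0 =
      fderiv ℝ (fderiv ℝ f) y₀ (f y₀) (f y₀) +
        (6 * ∑ j, b j * ∑ l, A j l * c l) • fderiv ℝ f y₀ (fderiv ℝ f y₀ (f y₀)) := by
    rw [iteratedDeriv_three_rkCurve_zero y₀ hA hf hc, hbc2]
    norm_num
  have hderiv := iteratedDeriv_hamiltonian_comp_eq_zero (J.mulVecDual_skew hJ) hH hγ _
    (rkCurve_zero A f y₀ b) h₁ h₂ h₃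
  have hO := sub_isBigO_pow_of_iteratedDeriv_eq_zero (x₀ := 0) (n := 4)
    ((hH.comp hγ).of_le (by decide)) hderiv
  simpa [rkStep_eq_rkCurve] using hO
end

section
/- Let an s-stage explicit Runge–Kutta method with coefficients (A, b, c), c_i = ∑_j a_{ij}, satisfy ∑_i b_i = 1 and ∑_i b_i c_i = 1/2, and suppose that for every dimension n, every constant skew-symmetric J ∈ ℝ^{n×n}, every smooth H : ℝⁿ → ℝ, and every initial value y₀, the one-step approximation satisfies H(y₁(h)) = H(y₀) + O(h⁴) as h → 0. Then ∑_i b_i c_i² = 1/3. -/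
open Filter Asymptotics Topology Matrix

/-!
Take `H(p, q) = p + q³` with the canonical `J = [[0, 1], [-1, 0]]`, so that `ṗ = 3q²`, `q̇ = -1`.
Every stage has `q`-component `-1`, hence from `y₀ = 0` the stages are `kᵢ = (3h²cᵢ², -1)` and
`y₁ = (3h³ ∑ bᵢcᵢ², -h ∑ bᵢ)`. The energy error is exactly `(3 ∑ bᵢcᵢ² - (∑ bᵢ)³) h³`, which is
`O(h⁴)` only if its coefficient vanishes.
-/

theorem eq_zero_of_const_mul_pow_isBigO_pow {𝕜 : Type*} [NontriviallyNormedField 𝕜]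
    {c : 𝕜} {k m : ℕ} (hkm : k < m)
    (h : (fun x : 𝕜 => c * x ^ k) =O[𝓝 0] fun x => x ^ m) : c = 0 := by
  by_contra hc
  have hself : (fun x : 𝕜 => x ^ k) =o[𝓝 0] fun x => x ^ k :=
    (isLittleO_const_mul_left_iff hc).mp (h.trans_isLittleO (isLittleO_pow_pow hkm))
  refine isLittleO_irrefl' ?_ hself
  have hne : ∃ᶠ x in 𝓝 (0 : 𝕜), x ≠ 0 :=
    (eventually_mem_nhdsWithin (s := {0}ᶜ)).frequently.filter_mono nhdsWithin_le_nhds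
  exact hne.mono fun x hx => by simpa using pow_ne_zero k hx

section ConstantComponent

variable {s n : ℕ} (A : Matrix (Fin s) (Fin s) ℝ) {f : (Fin n → ℝ) → Fin n → ℝ} {m : Fin n}
  {v : ℝ}

theorem rkStages_apply_of_forall_eq (hf : ∀ y, f y m = v) (h : ℝ) (y₀ : Fin n → ℝ) (i : Fin s) :
    rkStages A f h y₀ i m = v := by
  rw [rkStages]
  exact hf _

theorem rkStep_apply_of_forall_eq (b : Fin s → ℝ) (hf : ∀ y, f y m = v) (h : ℝ)
    (y₀ : Fin n → ℝ) : rkStep A b f h y₀ m = y₀ m + h * (∑ i, b i) * v := by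
  simp only [rkStep, rkStages_apply_of_forall_eq A hf, ← Finset.sum_mul]
  ring

variable {A}

theorem rkStages_apply_of_forall_eq_comp (hA : ∀ i j : Fin s, (i : ℕ) ≤ (j : ℕ) → A i j = 0)
    (hf : ∀ y, f y m = v) {m' : Fin n} {g : ℝ → ℝ} (hg : ∀ y, f y m' = g (y m)) (h : ℝ)
    (y₀ : Fin n → ℝ) (i : Fin s) :
    rkStages A f h y₀ i m' = g (y₀ m + h * (∑ j, A i j) * v) := by
  rw [rkStages, hg, mul_assoc, Finset.sum_mul]
  congr 3
  refine Finset.sum_congr rfl fun j _ => ?_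
  split_ifs with hji
  · rw [rkStages_apply_of_forall_eq A hf]
  · rw [hA i j (not_lt.mp hji), zero_mul]

theorem rkStep_apply_of_forall_eq_comp (hA : ∀ i j : Fin s, (i : ℕ) ≤ (j : ℕ) → A i j = 0)
    (b : Fin s → ℝ) (hf : ∀ y, f y m = v) {m' : Fin n} {g : ℝ → ℝ}
    (hg : ∀ y, f y m' = g (y m)) (h : ℝ) (y₀ : Fin n → ℝ) :
    rkStep A b f h y₀ m' = y₀ m' + h * ∑ i, b i * g (y₀ m + h * (∑ j, A i j) * v) := by
  simp only [rkStep, rkStages_apply_of_forall_eq_comp hA hf hg]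

end ConstantComponent

section CubicHamiltonian

def canonicalJ : Matrix (Fin 2) (Fin 2) ℝ := !![0, 1; -1, 0]

theorem canonicalJ_transpose : canonicalJᵀ = -canonicalJ := by
  ext i j
  fin_cases i <;> fin_cases j <;> simp [canonicalJ]

def cubicH (y : Fin 2 → ℝ) : ℝ := y 0 + y 1 ^ 3

theorem contDiff_cubicH : ContDiff ℝ (⊤ : ℕ∞) cubicH :=
  (contDiff_apply ℝ ℝ 0).add ((contDiff_apply ℝ ℝ 1).pow 3)

theorem grad_cubicH (y : Fin 2 → ℝ) : grad cubicH y = ![1, 3 * y 1 ^ 2] := by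
  have hderiv : HasFDerivAt cubicH
      (ContinuousLinearMap.proj (R := ℝ) (φ := fun _ : Fin 2 => ℝ) 0 +
        (3 * y 1 ^ 2) • ContinuousLinearMap.proj (R := ℝ) (φ := fun _ : Fin 2 => ℝ) 1) y := by
    have hp := (ContinuousLinearMap.proj (R := ℝ) (φ := fun _ : Fin 2 => ℝ) 0).hasFDerivAt (x := y)
    have hq := (hasDerivAt_pow 3 (y 1)).comp_hasFDerivAt y
      (ContinuousLinearMap.proj (R := ℝ) (φ := fun _ : Fin 2 => ℝ) 1).hasFDerivAt
    exact hp.add hq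
  ext i
  fin_cases i <;> simp [grad, hderiv.fderiv]

theorem canonicalJ_mulVec_grad_cubicH (y : Fin 2 → ℝ) :
    canonicalJ *ᵥ grad cubicH y = ![3 * y 1 ^ 2, -1] := by
  ext i
  fin_cases i <;> simp [canonicalJ, grad_cubicH]

theorem cubicH_rkStep_sub {s : ℕ} {A : Matrix (Fin s) (Fin s) ℝ} (b : Fin s → ℝ)
    (hA : ∀ i j : Fin s, (i : ℕ) ≤ (j : ℕ) → A i j = 0) (h : ℝ) :
    cubicH (rkStep A b (fun y => canonicalJ *ᵥ grad cubicH y) h 0) - cubicH 0 =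
      (3 * ∑ i, b i * (∑ j, A i j) ^ 2 - (∑ i, b i) ^ 3) * h ^ 3 := by
  have hq (y : Fin 2 → ℝ) : (canonicalJ *ᵥ grad cubicH y) 1 = -1 := by
    rw [canonicalJ_mulVec_grad_cubicH]; rfl
  have hp (y : Fin 2 → ℝ) : (canonicalJ *ᵥ grad cubicH y) 0 = 3 * y 1 ^ 2 := by
    rw [canonicalJ_mulVec_grad_cubicH]; rfl
  have hpow : ∑ i, b i * (3 * (h * (∑ j, A i j) * -1) ^ 2) =
      3 * h ^ 2 * ∑ i, b i * (∑ j, A i j) ^ 2 := by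
    rw [Finset.mul_sum]
    exact Finset.sum_congr rfl fun i _ => by ring
  simp only [cubicH, rkStep_apply_of_forall_eq_comp (g := fun q => 3 * q ^ 2) hA b hq hp,
    rkStep_apply_of_forall_eq A b hq, Pi.zero_apply, zero_add, hpow]
  ring

end CubicHamiltonian

theorem pep_order_three_necessary_general {s : ℕ}
    (A : Matrix (Fin s) (Fin s) ℝ) (b : Fin s → ℝ)
    (hA : ∀ i j : Fin s, (i : ℕ) ≤ (j : ℕ) → A i j = 0)
    (hb : ∑ i, b i = 1)
    (hPEP : ∀ (n : ℕ) (J : Matrix (Fin n) (Fin n) ℝ), Jᵀ = -J →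
      ∀ (H : (Fin n → ℝ) → ℝ), ContDiff ℝ (⊤ : ℕ∞) H →
        ∀ y₀ : Fin n → ℝ,
          (fun h => H (rkStep A b (fun y => J.mulVec (grad H y)) h y₀) - H y₀)
            =O[𝓝 (0 : ℝ)] (fun h => h ^ 4)) :
    ∑ i, b i * (∑ j, A i j) ^ 2 = 1 / 3 := by
  have hO := hPEP 2 canonicalJ canonicalJ_transpose cubicH contDiff_cubicH 0
  simp only [cubicH_rkStep_sub b hA] at hO
  have hcoeff := eq_zero_of_const_mul_pow_isBigO_pow (by norm_num) hO
  rw [hb] at hcoeff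
  linarith

/-- A second-order explicit Runge--Kutta method of pseudo-energy-preserving order at
least 3 (energy error `O(h⁴)` for every Hamiltonian system) satisfies `∑ bᵢcᵢ² = 1/3`. -/
theorem pep_order_three_necessary {s : ℕ}
    (A : Matrix (Fin s) (Fin s) ℝ) (b : Fin s → ℝ)
    (hA : ∀ i j : Fin s, (i : ℕ) ≤ (j : ℕ) → A i j = 0)
    (hb : ∑ i, b i = 1)
    (hbc : ∑ i, b i * (∑ j, A i j) = 1 / 2)
    (hPEP : ∀ (n : ℕ) (J : Matrix (Fin n) (Fin n) ℝ), Jᵀ = -J →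
      ∀ (H : (Fin n → ℝ) → ℝ), ContDiff ℝ (⊤ : ℕ∞) H →
        ∀ y₀ : Fin n → ℝ,
          (fun h => H (rkStep A b (fun y => J.mulVec (grad H y)) h y₀) - H y₀)
            =O[𝓝 (0 : ℝ)] (fun h => h ^ 4)) :
    ∑ i, b i * (∑ j, A i j) ^ 2 = 1 / 3 :=
  pep_order_three_necessary_general A b hA hb hPEP
end

section
/- Consider three-stage explicit Runge–Kutta methods with coefficients a₂₁, a₃₁, a₃₂, b₁, b₂, b₃ ∈ ℝ and abscissae c₁ = 0, c₂ = a₂₁, c₃ = a₃₁ + a₃₂. The unique such method satisfying the second-order conditions ∑ b_i = 1, ∑ b_i c_i = 1/2, the condition ∑ b_i c_i² = 1/3, and the three pseudo-energy-preserving order-4 conditions ∑_{i,j,k} b_i a_{ij} a_{jk} c_k = ∑_{i,j} b_i a_{ij} c_j − 1/8, ∑_{i,j} b_i c_i a_{ij} c_j − (1/2)∑_{i,j} b_i a_{ij} c_j² = 1/12, and ∑_i b_i c_i³ = 1/4, is a₂₁ = 1/3, a₃₁ = −5/48, a₃₂ = 15/16, b = (1/10, 1/2, 2/5) (hence c = (0,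 1/3, 5/6)). -/
/-!
With `c₁ = 0` the quadrature conditions `∑ bᵢ cᵢᵏ = 1/(k+1)` for `k ≤ 3` are exact on the
polynomial `x (x - c₂) (x - c₃)`, which vanishes at every node; this gives one equation between
`c₂` and `c₃`. Since `A³ = 0`, the first pseudo-energy condition says `b₃ a₃₂ c₂ = 1/8`, and
dividing the second by it gives `c₃ = 2/3 + c₂/2`. Substituting, the first equation becomes
`(3 c₂ - 1)² = 0`, so the nodes are forced, and the remaining coefficients follow linearly.
-/

namespace ThreeStageRK

def ReducedConditions (a₂₁ a₃₁ a₃₂ b₁ b₂ b₃ : ℝ) : Prop :=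
  b₁ + b₂ + b₃ = 1 ∧
    b₂ * a₂₁ + b₃ * (a₃₁ + a₃₂) = 1 / 2 ∧
    b₂ * a₂₁ ^ 2 + b₃ * (a₃₁ + a₃₂) ^ 2 = 1 / 3 ∧
    b₃ * a₃₂ * a₂₁ = 1 / 8 ∧
    b₃ * a₃₂ * a₂₁ * (a₃₁ + a₃₂ - a₂₁ / 2) = 1 / 12 ∧
    b₂ * a₂₁ ^ 3 + b₃ * (a₃₁ + a₃₂) ^ 3 = 1 / 4

theorem abscissae_eq {a₂₁ a₃₁ a₃₂ : ℝ} {A : Matrix (Fin 3) (Fin 3) ℝ}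
    (hA : A = !![0, 0, 0; a₂₁, 0, 0; a₃₁, a₃₂, 0]) {c : Fin 3 → ℝ} (hc : ∀ i, c i = ∑ j, A i j) :
    c = ![0, a₂₁, a₃₁ + a₃₂] := by
  ext i
  fin_cases i <;> simp [hc, hA, Fin.sum_univ_three]

theorem order_conditions_iff (a₂₁ a₃₁ a₃₂ b₁ b₂ b₃ : ℝ) :
    let A : Matrix (Fin 3) (Fin 3) ℝ := !![0, 0, 0; a₂₁, 0, 0; a₃₁, a₃₂, 0]
    let b : Fin 3 → ℝ := ![b₁, b₂, b₃]
    let c : Fin 3 → ℝ := ![0, a₂₁, a₃₁ + a₃₂]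
    ((∑ i, b i = 1) ∧
     (∑ i, b i * c i = 1 / 2) ∧
     (∑ i, b i * c i ^ 2 = 1 / 3) ∧
     (∑ i, ∑ j, ∑ k, b i * A i j * A j k * c k
        = (∑ i, ∑ j, b i * A i j * c j) - 1 / 8) ∧
     ((∑ i, ∑ j, b i * c i * A i j * c j)
        - (1 / 2) * (∑ i, ∑ j, b i * A i j * c j ^ 2) = 1 / 12) ∧
     (∑ i, b i * c i ^ 3 = 1 / 4)) ↔
    ReducedConditions a₂₁ a₃₁ a₃₂ b₁ b₂ b₃ := by
  intro A b c
  simp only [ReducedConditions, A, b, c, Fin.sum_univ_three, Fin.isValue, Matrix.of_apply,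
    Matrix.cons_val', Matrix.cons_val_zero, Matrix.cons_val_one, Matrix.cons_val,
    Matrix.cons_val_fin_one, mul_zero, zero_mul, zero_add, add_zero, ne_eq, OfNat.ofNat_ne_zero,
    not_false_eq_true, zero_pow]
  constructor <;> rintro ⟨h₀, h₁, h₂, h₄, h₅, h₆⟩ <;>
    exact ⟨h₀, h₁, h₂, by linarith, by linear_combination h₅, h₆⟩

theorem quadrature_nodes_relation {b₂ b₃ c₂ c₃ : ℝ}
    (h₁ : b₂ * c₂ + b₃ * c₃ = 1 / 2) (h₂ : b₂ * c₂ ^ 2 + b₃ * c₃ ^ 2 = 1 / 3)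
    (h₃ : b₂ * c₂ ^ 3 + b₃ * c₃ ^ 3 = 1 / 4) :
    1 / 4 - (c₂ + c₃) / 3 + c₂ * c₃ / 2 = 0 := by
  linear_combination (c₂ + c₃) * h₂ - h₃ - c₂ * c₃ * h₁

theorem nodes_eq_of_relation {c₂ c₃ : ℝ} (hrel : 1 / 4 - (c₂ + c₃) / 3 + c₂ * c₃ / 2 = 0)
    (hc₃ : c₃ = 2 / 3 + c₂ / 2) : c₂ = 1 / 3 ∧ c₃ = 5 / 6 := by
  have hsq : (3 * c₂ - 1) ^ 2 = 0 := by
    subst hc₃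
    linear_combination 36 * hrel
  have hc₂ : c₂ = 1 / 3 := by linarith [pow_eq_zero_iff (n := 2) two_ne_zero |>.mp hsq]
  exact ⟨hc₂, by rw [hc₃, hc₂]; norm_num⟩

theorem reducedConditions_iff {a₂₁ a₃₁ a₃₂ b₁ b₂ b₃ : ℝ} :
    ReducedConditions a₂₁ a₃₁ a₃₂ b₁ b₂ b₃ ↔
    (a₂₁ = 1 / 3 ∧ a₃₁ = -5 / 48 ∧ a₃₂ = 15 / 16 ∧
      b₁ = 1 / 10 ∧ b₂ = 1 / 2 ∧ b₃ = 2 / 5) := by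
  constructor
  · rintro ⟨h₀, h₁, h₂, hpep₁, hpep₂, h₃⟩
    have hc₃ : a₃₁ + a₃₂ = 2 / 3 + a₂₁ / 2 := by
      linear_combination 8 * hpep₂ - 8 * (a₃₁ + a₃₂ - a₂₁ / 2) * hpep₁
    obtain ⟨rfl, hnode₃⟩ := nodes_eq_of_relation (quadrature_nodes_relation h₁ h₂ h₃) hc₃
    rw [hnode₃] at h₁ h₂
    have hb₃ : b₃ = 2 / 5 := by linear_combination 12 / 5 * h₂ - 4 / 5 * h₁
    have hb₂ : b₂ = 1 / 2 := by linear_combination 3 * h₁ - 5 / 2 * hb₃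
    have ha₃₂ : a₃₂ = 15 / 16 := by linear_combination 15 / 2 * hpep₁ - 5 / 2 * a₃₂ * hb₃
    refine ⟨rfl, by linarith, ha₃₂, by linarith, hb₂, hb₃⟩
  · rintro ⟨rfl, rfl, rfl, rfl, rfl, rfl⟩
    norm_num [ReducedConditions]

end ThreeStageRK

/-- The unique three-stage explicit Runge--Kutta method satisfying the classical
second-order conditions together with the pseudo-energy-preserving order-3 and
order-4 conditions is `a₂₁ = 1/3`, `a₃₁ = −5/48`, `a₃₂ = 15/16`,
`b = (1/10, 1/2, 2/5)` (hence `c = (0, 1/3, 5/6)`). -/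
theorem three_stage_pep_order_four_unique
    (a₂₁ a₃₁ a₃₂ b₁ b₂ b₃ : ℝ)
    (A : Matrix (Fin 3) (Fin 3) ℝ) (hA : A = !![0, 0, 0; a₂₁, 0, 0; a₃₁, a₃₂, 0])
    (b : Fin 3 → ℝ) (hb : b = ![b₁, b₂, b₃])
    (c : Fin 3 → ℝ) (hc : ∀ i, c i = ∑ j, A i j) :
    ((∑ i, b i = 1) ∧
     (∑ i, b i * c i = 1 / 2) ∧
     (∑ i, b i * c i ^ 2 = 1 / 3) ∧
     (∑ i, ∑ j, ∑ k, b i * A i j * A j k * c k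
        = (∑ i, ∑ j, b i * A i j * c j) - 1 / 8) ∧
     ((∑ i, ∑ j, b i * c i * A i j * c j)
        - (1 / 2) * (∑ i, ∑ j, b i * A i j * c j ^ 2) = 1 / 12) ∧
     (∑ i, b i * c i ^ 3 = 1 / 4)) ↔
    (a₂₁ = 1 / 3 ∧ a₃₁ = -5 / 48 ∧ a₃₂ = 15 / 16 ∧
      b₁ = 1 / 10 ∧ b₂ = 1 / 2 ∧ b₃ = 2 / 5) := by
  rw [ThreeStageRK.abscissae_eq hA hc, hA, hb]
  exact (ThreeStageRK.order_conditions_iff a₂₁ a₃₁ a₃₂ b₁ b₂ b₃).trans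
    ThreeStageRK.reducedConditions_iff
end

section
/- Let D₁, D₂ ∈ ℝ^{N×N} satisfy D₁ᵀ = −D₁, D₂ᵀ = D₂, D₁D₂ = D₂D₁, and let I − D₂ be invertible. Then the matrix B = (I − D₂)^{-1} D₁ is skew-symmetric, and consequently, for every solution u : I → ℝᴺ of the semidiscrete BBM system u'(t) = −(I − D₂)^{-1} D₁ ( (1/2) u(t)∘u(t) + u(t) ), where ∘ denotes the componentwise (Hadamard) product, the discrete Hamiltonian H(u) = ∑_{i=1}^{N} ( (1/2) u_i² + (1/6) u_i³ ) is constant in time. -/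
/-!
Since `1 - D₂` is symmetric and commutes with `D₁`, so does its inverse, whence
`B = (1 - D₂)⁻¹ D₁` is skew-symmetric. The gradient of `H` at `u` is `(1/2) u∘u + u`,
so along a solution `d/dt H(u) = -⟪∇H(u), B ∇H(u)⟫`, a skew quadratic form, which vanishes.
-/

open Matrix

theorem Commute.ringInverse_left {M₀ : Type*} [MonoidWithZero M₀] {a b : M₀}
    (h : Commute a b) : Commute (Ring.inverse a) b := by
  by_cases ha : IsUnit a
  · obtain ⟨u, rfl⟩ := ha
    rw [Ring.inverse_unit]
    exact h.units_inv_left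
  · rw [Ring.inverse_non_unit a ha]
    exact Commute.zero_left b

namespace Matrix

variable {n α : Type*} [Fintype n] [CommRing α]

theorem transpose_inv_mul_eq_neg [DecidableEq n] {A B : Matrix n n α} (hA : Aᵀ = A)
    (hB : Bᵀ = -B) (h : Commute A B) : (A⁻¹ * B)ᵀ = -(A⁻¹ * B) := by
  have hinv : Commute A⁻¹ B := by
    rw [nonsing_inv_eq_ringInverse]
    exact h.ringInverse_left
  rw [transpose_mul, hB, transpose_nonsing_inv, hA, neg_mul, hinv.eq]

theorem dotProduct_mulVec_self_eq_zero [IsAddTorsionFree α] {B : Matrix n n α} (hB : Bᵀ = -B)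
    (x : n → α) : x ⬝ᵥ B *ᵥ x = 0 := by
  refine self_eq_neg.mp ?_
  calc x ⬝ᵥ B *ᵥ x = Bᵀ *ᵥ x ⬝ᵥ x := by rw [dotProduct_mulVec, mulVec_transpose]
    _ = -(x ⬝ᵥ B *ᵥ x) := by rw [hB, neg_mulVec, neg_dotProduct, dotProduct_comm]

end Matrix

theorem Set.OrdConnected.eq_of_hasDerivAt_eq_zero {E : Type*} [NormedAddCommGroup E]
    [NormedSpace ℝ E] {I : Set ℝ} (hI : I.OrdConnected) {f : ℝ → E}
    (hf : ∀ t ∈ I, HasDerivAt f 0 t) {t s : ℝ} (ht : t ∈ I) (hs : s ∈ I) : f t = f s := by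
  have h := hI.convex.norm_image_sub_le_of_norm_hasDerivWithin_le
    (fun x hx => (hf x hx).hasDerivWithinAt) (fun _ _ => norm_zero.le) hs ht
  rwa [zero_mul, norm_le_zero_iff, sub_eq_zero] at h

noncomputable section Hamiltonian

variable {ι : Type*} [Fintype ι]

def bbmHamiltonian (u : ι → ℝ) : ℝ :=
  ∑ i, ((1 / 2) * u i ^ 2 + (1 / 6) * u i ^ 3)

def bbmHamiltonianGrad (u : ι → ℝ) : ι → ℝ :=
  (1 / 2 : ℝ) • (u * u) + u

theorem HasDerivAt.bbmHamiltonian {u : ℝ → ι → ℝ} {u' : ι → ℝ} {t : ℝ}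
    (hu : HasDerivAt u u' t) :
    HasDerivAt (fun τ => bbmHamiltonian (u τ)) (bbmHamiltonianGrad (u t) ⬝ᵥ u') t := by
  refine HasDerivAt.fun_sum fun i _ => ?_
  have hui := hasDerivAt_pi.mp hu i
  refine (((hui.pow 2).const_mul (1 / 2 : ℝ)).add ((hui.pow 3).const_mul (1 / 6))).congr_deriv ?_
  simp only [bbmHamiltonianGrad, Pi.add_apply, Pi.smul_apply, Pi.mul_apply, smul_eq_mul]
  ring

end Hamiltonian

theorem bbm_semidiscretization_conserves_energy_general {N : ℕ}
    (D₁ D₂ : Matrix (Fin N) (Fin N) ℝ)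
    (h₁ : D₁ᵀ = -D₁) (h₂ : D₂ᵀ = D₂) (hcomm : D₁ * D₂ = D₂ * D₁) :
    ((1 - D₂)⁻¹ * D₁)ᵀ = -((1 - D₂)⁻¹ * D₁) ∧
    ∀ (I : Set ℝ), I.OrdConnected →
      ∀ u : ℝ → (Fin N → ℝ),
        (∀ t ∈ I, HasDerivAt u
          (-(((1 - D₂)⁻¹ * D₁).mulVec ((1 / 2 : ℝ) • (u t * u t) + u t))) t) →
        ∀ t ∈ I, ∀ s ∈ I,
          (∑ i, ((1 / 2) * (u t i) ^ 2 + (1 / 6) * (u t i) ^ 3))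
            = ∑ i, ((1 / 2) * (u s i) ^ 2 + (1 / 6) * (u s i) ^ 3) := by
  have hsymm : (1 - D₂)ᵀ = 1 - D₂ := by rw [transpose_sub, transpose_one, h₂]
  have hcomm' : Commute (1 - D₂) D₁ := (Commute.one_left D₁).sub_left (hcomm : Commute D₁ D₂).symm
  have hskew : ((1 - D₂)⁻¹ * D₁)ᵀ = -((1 - D₂)⁻¹ * D₁) := transpose_inv_mul_eq_neg hsymm h₁ hcomm'
  refine ⟨hskew, fun I hI u hu t ht s hs => ?_⟩
  refine hI.eq_of_hasDerivAt_eq_zero (f := fun τ => bbmHamiltonian (u τ)) (fun τ hτ => ?_) ht hs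
  refine (hu τ hτ).bbmHamiltonian.congr_deriv ?_
  rw [dotProduct_neg, bbmHamiltonianGrad, dotProduct_mulVec_self_eq_zero hskew, neg_zero]

/-- For the conservative semidiscretization of the BBM equation: if `D₁` is
skew-symmetric, `D₂` is symmetric, they commute, and `I − D₂` is invertible, then
`B = (I − D₂)⁻¹ D₁` is skew-symmetric, and hence the discrete Hamiltonian
`H(u) = ∑ᵢ (u_i²/2 + u_i³/6)` is constant along every solution of
`u' = −B((1/2) u∘u + u)` on an interval. -/
theorem bbm_semidiscretization_conserves_energy {N : ℕ}
    (D₁ D₂ : Matrix (Fin N) (Fin N) ℝ)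
    (h₁ : D₁ᵀ = -D₁) (h₂ : D₂ᵀ = D₂) (hcomm : D₁ * D₂ = D₂ * D₁)
    (hinv : IsUnit (1 - D₂)) :
    ((1 - D₂)⁻¹ * D₁)ᵀ = -((1 - D₂)⁻¹ * D₁) ∧
    ∀ (I : Set ℝ), I.OrdConnected →
      ∀ u : ℝ → (Fin N → ℝ),
        (∀ t ∈ I, HasDerivAt u
          (-(((1 - D₂)⁻¹ * D₁).mulVec ((1 / 2 : ℝ) • (u t * u t) + u t))) t) →
        ∀ t ∈ I, ∀ s ∈ I,
          (∑ i, ((1 / 2) * (u t i) ^ 2 + (1 / 6) * (u t i) ^ 3))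
            = ∑ i, ((1 / 2) * (u s i) ^ 2 + (1 / 6) * (u s i) ^ 3) :=
  bbm_semidiscretization_conserves_energy_general D₁ D₂ h₁ h₂ hcomm
end

section
/- Let D₁, D₂ ∈ ℝ^{N×N} satisfy D₁ᵀ = −D₁, D₂ᵀ = D₂, D₁D₂ = D₂D₁, let I − D₂ be invertible, and assume D₁𝟙 = 0 and D₂𝟙 = 0 where 𝟙 = (1,…,1)ᵀ. Then for every solution u : I → ℝᴺ of the semidiscrete BBM system u'(t) = −(I − D₂)^{-1} D₁ ( (1/2) u(t)∘u(t) + u(t) ), the discrete mass ∑_{i=1}^{N} u_i(t) is constant in time. -/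
open Matrix

/-! The mass changes at the rate `-𝟙ᵀ (1 - D₂)⁻¹ D₁ w`. As `D₁` commutes with `D₂`, it commutes
with `(1 - D₂)⁻¹`, so the rate is `-(𝟙ᵀ D₁) (1 - D₂)⁻¹ w`, and `𝟙ᵀ D₁ = -(D₁ 𝟙)ᵀ = 0` by
skew-symmetry. -/

namespace Matrix

variable {m n R : Type*} [Fintype m] [Fintype n] [CommRing R]

theorem commute_nonsing_inv_right [DecidableEq n] {A B : Matrix n n R} (h : Commute A B) :
    Commute A B⁻¹ := by
  by_cases hB : IsUnit B.det
  · have hBu : IsUnit B := (isUnit_iff_isUnit_det B).mpr hB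
    rw [nonsing_inv_eq_ringInverse, ← hBu.unit_spec, Ring.inverse_unit]
    exact Commute.units_inv_right (by rwa [hBu.unit_spec])
  · rw [nonsing_inv_apply_not_isUnit B hB]
    exact Commute.zero_right A

theorem vecMul_eq_zero_of_transpose_eq_neg {A : Matrix n n R} (hA : Aᵀ = -A) {v : n → R}
    (hv : A *ᵥ v = 0) : v ᵥ* A = 0 := by
  rw [← mulVec_transpose, hA, neg_mulVec, hv, neg_zero]

theorem sum_mulVec_eq_zero {M : Matrix m n R} (hM : 1 ᵥ* M = 0) (w : n → R) :
    ∑ i, (M *ᵥ w) i = 0 := by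
  rw [← one_dotProduct, dotProduct_mulVec, hM, zero_dotProduct]

end Matrix

theorem Convex.is_const_of_hasDerivWithinAt_zero {E : Type*} [NormedAddCommGroup E]
    [NormedSpace ℝ E] {s : Set ℝ} (hs : Convex ℝ s) {f : ℝ → E}
    (hf : ∀ x ∈ s, HasDerivWithinAt f 0 s x) {x y : ℝ} (hx : x ∈ s) (hy : y ∈ s) :
    f x = f y := by
  have h := hs.norm_image_sub_le_of_norm_hasDerivWithin_le hf (C := 0) (fun _ _ => by simp)
    hy hx
  rwa [zero_mul, norm_le_zero_iff, sub_eq_zero] at h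

theorem HasDerivAt.sum_apply {ι : Type*} [Fintype ι] {u : ℝ → ι → ℝ} {u' : ι → ℝ} {t : ℝ}
    (h : HasDerivAt u u' t) : HasDerivAt (fun τ => ∑ i, u τ i) (∑ i, u' i) t :=
  HasDerivAt.fun_sum fun i _ => hasDerivAt_pi.mp h i

theorem bbm_semidiscretization_conserves_mass_general {N : ℕ}
    (D₁ D₂ : Matrix (Fin N) (Fin N) ℝ)
    (h₁ : D₁ᵀ = -D₁) (hcomm : D₁ * D₂ = D₂ * D₁)
    (hD₁one : D₁.mulVec (fun _ => 1) = 0) :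
    ∀ (I : Set ℝ), I.OrdConnected →
      ∀ u : ℝ → (Fin N → ℝ),
        (∀ t ∈ I, HasDerivAt u
          (-(((1 - D₂)⁻¹ * D₁).mulVec ((1 / 2 : ℝ) • (u t * u t) + u t))) t) →
        ∀ t ∈ I, ∀ s ∈ I, (∑ i, u t i) = ∑ i, u s i := by
  intro I hI u hu t ht s hs
  have hinv_comm : Commute D₁ (1 - D₂)⁻¹ :=
    commute_nonsing_inv_right ((Commute.one_right D₁).sub_right hcomm)
  have hmass_rate : 1 ᵥ* ((1 - D₂)⁻¹ * D₁) = 0 := by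
    rw [← hinv_comm.eq, ← vecMul_vecMul,
      vecMul_eq_zero_of_transpose_eq_neg (v := 1) h₁ hD₁one, zero_vecMul]
  refine hI.convex.is_const_of_hasDerivWithinAt_zero (f := fun τ => ∑ i, u τ i)
    (fun x hx => ?_) ht hs
  have h := (hu x hx).sum_apply
  simp only [Pi.neg_apply, Finset.sum_neg_distrib, sum_mulVec_eq_zero hmass_rate, neg_zero] at h
  exact h.hasDerivWithinAt

/-- For the conservative semidiscretization of the BBM equation: if `D₁` is
skew-symmetric, `D₂` is symmetric, they commute, `I − D₂` is invertible, and both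
annihilate the constant vector `𝟙`, then the discrete mass `∑ᵢ uᵢ` is constant along
every solution of `u' = −(I − D₂)⁻¹D₁((1/2) u∘u + u)` on an interval. -/
theorem bbm_semidiscretization_conserves_mass {N : ℕ}
    (D₁ D₂ : Matrix (Fin N) (Fin N) ℝ)
    (h₁ : D₁ᵀ = -D₁) (h₂ : D₂ᵀ = D₂) (hcomm : D₁ * D₂ = D₂ * D₁)
    (hinv : IsUnit (1 - D₂))
    (hD₁one : D₁.mulVec (fun _ => 1) = 0)
    (hD₂one : D₂.mulVec (fun _ => 1) = 0) :
    ∀ (I : Set ℝ), I.OrdConnected →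
      ∀ u : ℝ → (Fin N → ℝ),
        (∀ t ∈ I, HasDerivAt u
          (-(((1 - D₂)⁻¹ * D₁).mulVec ((1 / 2 : ℝ) • (u t * u t) + u t))) t) →
        ∀ t ∈ I, ∀ s ∈ I, (∑ i, u t i) = ∑ i, u s i :=
  bbm_semidiscretization_conserves_mass_general D₁ D₂ h₁ hcomm hD₁one
end
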